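/- In the unique planar embedding of a D3-reducible graph, every triangle (3-cycle) of the graph is a face. -/

import Mathlib

/-- A finite graph on a subset of `ℕ`, allowing vertex-set changes under reductions. -/
structure FinGraph where
  verts : Finset ℕ
  Adj : ℕ → ℕ → Prop
  symm : ∀ u v, Adj u v → Adj v u
  loopless : ∀ u, ¬ Adj u u
  support : ∀ u v, Adj u v → u ∈ verts ∧ v ∈ verts

namespace FinGraph

def neighborSet (G : FinGraph) (v : ℕ) : Set ℕ := {u | G.Adj v u}

/-- The degree of a vertex. -/
noncomputable def degree (G : FinGraph) (v : ℕ) : ℕ := (G.neighborSet v).ncard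

/-- Reachability by a walk staying inside the set `S`. -/
def ReachableWithin (G : FinGraph) (S : Set ℕ) (u v : ℕ) : Prop :=
  Relation.ReflTransGen (fun a b => G.Adj a b ∧ a ∈ S ∧ b ∈ S) u v

/-- The subgraph induced on `S` is connected. -/
def ConnectedOn (G : FinGraph) (S : Set ℕ) : Prop :=
  ∀ u ∈ S, ∀ v ∈ S, G.ReachableWithin S u v

def Connected (G : FinGraph) : Prop := G.ConnectedOn ↑G.verts

/-- 3-vertex-connectivity: more than three vertices, and connected after deleting
any two vertices. -/
def ThreeConnected (G : FinGraph) : Prop :=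
  3 < G.verts.card ∧ ∀ x y : ℕ, G.ConnectedOn (↑G.verts \ {x, y})

/-- Graph isomorphism. -/
def Iso (G H : FinGraph) : Prop :=
  ∃ f : ℕ → ℕ, Set.BijOn f ↑G.verts ↑H.verts ∧
    ∀ u ∈ G.verts, ∀ v ∈ G.verts, (G.Adj u v ↔ H.Adj (f u) (f v))

/-- The configuration for a D3a reduction: a triangle `p q r` of degree-three
vertices whose outside neighbors `p' q' r'` are three distinct vertices. -/
def D3aConfig (G : FinGraph) (p q r p' q' r' : ℕ) : Prop :=
  G.degree p = 3 ∧ G.degree q = 3 ∧ G.degree r = 3 ∧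
  G.Adj p q ∧ G.Adj q r ∧ G.Adj p r ∧
  G.Adj p p' ∧ G.Adj q q' ∧ G.Adj r r' ∧
  p' ∉ ({p, q, r} : Set ℕ) ∧ q' ∉ ({p, q, r} : Set ℕ) ∧ r' ∉ ({p, q, r} : Set ℕ) ∧
  p' ≠ q' ∧ p' ≠ r' ∧ q' ≠ r'

/-- A D3a reduction from `G` to `H`: collapse such a triangle to a new vertex `t`. -/
def D3a (G H : FinGraph) : Prop :=
  ∃ p q r p' q' r' t, G.D3aConfig p q r p' q' r' ∧ t ∉ G.verts ∧
    H.verts = (G.verts \ {p, q, r}) ∪ {t} ∧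
    ∀ a b, H.Adj a b ↔
      (G.Adj a b ∧ a ∉ ({p, q, r} : Set ℕ) ∧ b ∉ ({p, q, r} : Set ℕ)) ∨
      (a = t ∧ b ∈ ({p', q', r'} : Set ℕ)) ∨
      (b = t ∧ a ∈ ({p', q', r'} : Set ℕ))

/-- The configuration for a D3b reduction: an induced path `p q r` of degree-three
vertices, all adjacent to a common apex `s`. -/
def D3bConfig (G : FinGraph) (p q r s : ℕ) : Prop :=
  G.degree p = 3 ∧ G.degree q = 3 ∧ G.degree r = 3 ∧
  G.Adj p q ∧ G.Adj q r ∧ ¬ G.Adj p r ∧ p ≠ r ∧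
  G.Adj s p ∧ G.Adj s q ∧ G.Adj s r

/-- A D3b reduction from `G` to `H`: delete the middle vertex `q` and add edge `pr`. -/
def D3b (G H : FinGraph) : Prop :=
  ∃ p q r s, G.D3bConfig p q r s ∧
    H.verts = G.verts \ {q} ∧
    ∀ a b, H.Adj a b ↔
      (G.Adj a b ∧ a ≠ q ∧ b ≠ q) ∨ (a = p ∧ b = r) ∨ (a = r ∧ b = p)

/-- A single D3 reduction. -/
def D3Step (G H : FinGraph) : Prop := G.D3a H ∨ G.D3b H

/-- `G` is a complete graph on four vertices. -/
def IsK4 (G : FinGraph) : Prop :=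
  G.verts.card = 4 ∧ ∀ u ∈ G.verts, ∀ v ∈ G.verts, u ≠ v → G.Adj u v

/-- A graph is D3-reducible if some sequence of D3 reductions takes it to `K₄`. -/
def D3Reducible (G : FinGraph) : Prop :=
  ∃ H, Relation.ReflTransGen D3Step G H ∧ H.IsK4

/-- No D3 reduction applies. -/
def Irreducible (G : FinGraph) : Prop := ¬ ∃ H, G.D3Step H

/-- `H` is a minor of `G`, witnessed by connected, disjoint branch sets. -/
def HasMinor (G H : FinGraph) : Prop :=
  ∃ B : ℕ → Finset ℕ,
    (∀ v ∈ H.verts, (B v).Nonempty ∧ ↑(B v) ⊆ (↑G.verts : Set ℕ) ∧ G.ConnectedOn ↑(B v)) ∧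
    (∀ u ∈ H.verts, ∀ v ∈ H.verts, u ≠ v → Disjoint (B u) (B v)) ∧
    (∀ u v, H.Adj u v → ∃ a ∈ B u, ∃ b ∈ B v, G.Adj a b)

def K5Graph : FinGraph where
  verts := Finset.range 5
  Adj a b := a ≠ b ∧ a < 5 ∧ b < 5
  symm := fun _ _ h => ⟨Ne.symm h.1, h.2.2, h.2.1⟩
  loopless := fun _ h => h.1 rfl
  support := fun _ _ h => ⟨Finset.mem_range.2 h.2.1, Finset.mem_range.2 h.2.2⟩

def K33Graph : FinGraph where
  verts := Finset.range 6
  Adj a b := (a < 3 ∧ 3 ≤ b ∧ b < 6) ∨ (b < 3 ∧ 3 ≤ a ∧ a < 6)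
  symm := fun _ _ h => h.elim Or.inr Or.inl
  loopless := by intro u h; rcases h with ⟨h1, h2, _⟩ | ⟨h1, h2, _⟩ <;> omega
  support := by
    intro u v h
    constructor <;> rw [Finset.mem_range] <;>
      rcases h with ⟨h1, h2, h3⟩ | ⟨h1, h2, h3⟩ <;> omega

/-- Planarity, via Wagner's characterization: no `K₅` and no `K₃,₃` minor. -/
def Planar (G : FinGraph) : Prop := ¬ G.HasMinor K5Graph ∧ ¬ G.HasMinor K33Graph

/-- `T` is a tree: nonempty, connected, and every edge is a bridge (acyclicity). -/
def IsTreeGraph (T : FinGraph) : Prop :=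
  T.verts.Nonempty ∧ T.Connected ∧
  ∀ u v, T.Adj u v → ¬ Relation.ReflTransGen
    (fun a b => T.Adj a b ∧ ¬(a = u ∧ b = v) ∧ ¬(a = v ∧ b = u)) u v

def IsLeaf (T : FinGraph) (v : ℕ) : Prop := T.degree v = 1

/-- The edges of `G` not in the spanning tree `T` (the candidate cycle edges). -/
def cycleAdj (G T : FinGraph) (a b : ℕ) : Prop := G.Adj a b ∧ ¬ T.Adj a b

/-- `G` is a Halin graph with underlying tree `T`: `T` is a spanning tree with at
least four vertices and no degree-two vertex, the non-tree edges form a single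
cycle passing exactly through the leaves of `T`, and `G` is planar (which forces
the cycle to traverse the leaves in the cyclic order of a planar embedding of `T`). -/
def IsHalinVia (G T : FinGraph) : Prop :=
  IsTreeGraph T ∧ T.verts = G.verts ∧ 4 ≤ T.verts.card ∧
  (∀ v ∈ T.verts, T.degree v ≠ 2) ∧
  (∀ a b, T.Adj a b → G.Adj a b) ∧
  (∀ a b, cycleAdj G T a b → T.IsLeaf a ∧ T.IsLeaf b) ∧
  (∀ v ∈ G.verts, T.IsLeaf v → {u | cycleAdj G T v u}.ncard = 2) ∧
  (∀ u v, u ∈ G.verts → v ∈ G.verts → T.IsLeaf u → T.IsLeaf v →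
    Relation.ReflTransGen (cycleAdj G T) u v) ∧
  G.Planar

def IsHalin (G : FinGraph) : Prop := ∃ T, IsHalinVia G T

/-- Treewidth at most `k`, via tree decompositions. -/
def TreewidthLE (G : FinGraph) (k : ℕ) : Prop :=
  ∃ (ι : Type) (T : SimpleGraph ι) (bag : ι → Finset ℕ),
    T.IsTree ∧
    (∀ v ∈ G.verts, ∃ i, v ∈ bag i) ∧
    (∀ u v, G.Adj u v → ∃ i, u ∈ bag i ∧ v ∈ bag i) ∧
    (∀ (v : ℕ) (i j : ι) (p : T.Walk i j), p.IsPath → v ∈ bag i → v ∈ bag j →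
      ∀ m ∈ p.support, v ∈ bag m) ∧
    (∀ i, (bag i).card ≤ k + 1)

/-- A face of a 3-connected planar graph, by Tutte's characterization:
an induced cycle whose complement induces a connected subgraph. -/
def IsFaceCycle (G : FinGraph) (C : Finset ℕ) : Prop :=
  ↑C ⊆ (↑G.verts : Set ℕ) ∧ 3 ≤ C.card ∧
  (∀ v ∈ C, {u | u ∈ C ∧ G.Adj v u}.ncard = 2) ∧
  G.ConnectedOn ↑C ∧
  G.ConnectedOn (↑G.verts \ ↑C)

/-- `D` is the planar dual of the (3-connected planar) graph `G`: its vertices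
correspond bijectively to the faces of `G`, with adjacency for faces sharing an edge. -/
def IsDualOf (D G : FinGraph) : Prop :=
  ∃ F : ℕ → Finset ℕ,
    Set.InjOn F ↑D.verts ∧
    (∀ d ∈ D.verts, IsFaceCycle G (F d)) ∧
    (∀ C, IsFaceCycle G C → ∃ d ∈ D.verts, F d = C) ∧
    (∀ d e, D.Adj d e ↔ d ∈ D.verts ∧ e ∈ D.verts ∧ d ≠ e ∧
      ∃ u v, G.Adj u v ∧ u ∈ F d ∧ v ∈ F d ∧ u ∈ F e ∧ v ∈ F e)

/-- A wheel graph: a hub adjacent to all other vertices, which form a cycle. -/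
def IsWheel (G : FinGraph) : Prop :=
  4 ≤ G.verts.card ∧ ∃ h ∈ G.verts,
    (∀ v ∈ G.verts, v ≠ h → G.Adj h v ∧ G.degree v = 3) ∧
    G.ConnectedOn (↑G.verts \ {h})

/-- Glue the wheel `W` onto `G` along a shared triangular face `{a,b,c}`,
identifying the two faces vertexwise, producing `H`. -/
def GlueStep (G W H : FinGraph) : Prop :=
  ∃ a b c : ℕ, a ≠ b ∧ a ≠ c ∧ b ≠ c ∧
    IsFaceCycle G {a, b, c} ∧ IsFaceCycle W {a, b, c} ∧
    (↑G.verts ∩ ↑W.verts : Set ℕ) = {a, b, c} ∧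
    H.verts = G.verts ∪ W.verts ∧
    (∀ u v, H.Adj u v ↔ G.Adj u v ∨ W.Adj u v)

/-- Graphs constructed by gluing wheels together along triangular faces.
(Each gluing attaches one further wheel along a current triangular face; a glued
face stops being a face, so each face is used at most once, and no graph is
glued to itself.) -/
inductive GluedWheels : FinGraph → Prop
  | base (G : FinGraph) : IsWheel G → GluedWheels G
  | glue (G W H : FinGraph) : GluedWheels G → IsWheel W → GlueStep G W H → GluedWheels H

/-- Delete vertices in `S` from `G`. -/
def removeVerts (G : FinGraph) (S : Finset ℕ) : FinGraph where
  verts := G.verts \ S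
  Adj a b := G.Adj a b ∧ a ∉ S ∧ b ∉ S
  symm := fun u v h => ⟨G.symm u v h.1, h.2.2, h.2.1⟩
  loopless := fun u h => G.loopless u h.1
  support := fun u v h =>
    ⟨Finset.mem_sdiff.2 ⟨(G.support u v h.1).1, h.2.1⟩,
     Finset.mem_sdiff.2 ⟨(G.support u v h.1).2, h.2.2⟩⟩

/-- Delete the edge `uv` from `G`. -/
def deleteEdge (G : FinGraph) (u v : ℕ) : FinGraph where
  verts := G.verts
  Adj a b := G.Adj a b ∧ ¬((a = u ∧ b = v) ∨ (a = v ∧ b = u))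
  symm := fun a b h => ⟨G.symm a b h.1, by tauto⟩
  loopless := fun a h => G.loopless a h.1
  support := fun a b h => G.support a b h.1

end FinGraph

/-!
Induct backwards along the reduction sequence with the invariant that neither a set of at
most two vertices nor a triangle separates the graph. `K₄` has it, and `G` inherits it from
a D3 reduct `H`, since walks of `H` avoiding the image of the separator lift to `G`: an
edge at the contracted vertex `t` of a D3a reduction becomes a path through the triangle
`p q r`, the added edge `p r` of a D3b reduction becomes `p q r`, and the vertices removed
by the reduction reattach through neighbours the separator cannot all delete. A triangle
meeting the reduced configuration is the contracted triangle or `p q s`, `r q s`, and these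
correspond to a vertex or a pair of `H`. A triangle with connected complement is a face.
-/

namespace FinGraph

variable {G H : FinGraph} {S S' : Set ℕ} {a b c u v w : ℕ}

theorem Adj.ne (h : G.Adj u v) : u ≠ v := fun e => G.loopless v (e ▸ h)

theorem Adj.symm (h : G.Adj u v) : G.Adj v u := G.symm u v h

theorem Adj.mem_verts_left (h : G.Adj u v) : u ∈ G.verts := (G.support u v h).1

theorem Adj.mem_verts_right (h : G.Adj u v) : v ∈ G.verts := (G.support u v h).2

theorem adj_of_mem_triangle (hab : G.Adj a b) (hbc : G.Adj b c) (hac : G.Adj a c)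
    (hu : u ∈ ({a, b, c} : Set ℕ)) (hv : v ∈ ({a, b, c} : Set ℕ)) (huv : u ≠ v) :
    G.Adj u v := by
  rcases hu with rfl | rfl | rfl <;> rcases hv with rfl | rfl | rfl <;>
    first
      | exact absurd rfl huv
      | assumption
      | exact Adj.symm ‹_›

theorem neighborSet_eq_of_degree_eq_three (hdeg : G.degree v = 3) (ha : G.Adj v a)
    (hb : G.Adj v b) (hc : G.Adj v c) (hab : a ≠ b) (hac : a ≠ c) (hbc : b ≠ c) :
    G.neighborSet v = {a, b, c} := by
  have hfin : (G.neighborSet v).Finite := G.verts.finite_toSet.subset fun _ h => h.mem_verts_right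
  refine (Set.eq_of_subset_of_ncard_le ?_ ?_ hfin).symm
  · rintro u (rfl | rfl | rfl) <;> assumption
  · rw [Set.ncard_eq_three.2 ⟨a, b, c, hab, hac, hbc, rfl⟩]
    exact hdeg.le

theorem ReachableWithin.refl (S : Set ℕ) (u : ℕ) : G.ReachableWithin S u u :=
  Relation.ReflTransGen.refl

theorem ReachableWithin.trans (h : G.ReachableWithin S u v) (h' : G.ReachableWithin S v w) :
    G.ReachableWithin S u w :=
  Relation.ReflTransGen.trans h h'

theorem Adj.reachableWithin (h : G.Adj u v) (hu : u ∈ S) (hv : v ∈ S) :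
    G.ReachableWithin S u v :=
  Relation.ReflTransGen.single ⟨h, hu, hv⟩

theorem ReachableWithin.symm (h : G.ReachableWithin S u v) : G.ReachableWithin S v u := by
  induction h with
  | refl => exact .refl S _
  | tail _ hab ih => exact (hab.1.symm.reachableWithin hab.2.2 hab.2.1).trans ih

theorem ReachableWithin.map (φ : ℕ → ℕ)
    (hedge : ∀ a ∈ S', ∀ b ∈ S', H.Adj a b → G.ReachableWithin S (φ a) (φ b))
    (h : H.ReachableWithin S' u v) : G.ReachableWithin S (φ u) (φ v) := by
  induction h with
  | refl => exact .refl S _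
  | tail _ hab ih => exact ih.trans (hedge _ hab.2.1 _ hab.2.2 hab.1)

theorem ConnectedOn.of_map (φ : ℕ → ℕ) (hH : H.ConnectedOn S')
    (hedge : ∀ a ∈ S', ∀ b ∈ S', H.Adj a b → G.ReachableWithin S (φ a) (φ b))
    (hcover : ∀ u ∈ S, ∃ w ∈ S', G.ReachableWithin S u (φ w)) : G.ConnectedOn S := by
  intro u hu v hv
  obtain ⟨u', hu', hu⟩ := hcover u hu
  obtain ⟨v', hv', hv⟩ := hcover v hv
  exact (hu.trans ((hH u' hu' v' hv').map φ hedge)).trans hv.symm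

theorem ConnectedOn.of_adj (h : H.ConnectedOn S)
    (hadj : ∀ a ∈ S, ∀ b ∈ S, H.Adj a b → G.Adj a b) : G.ConnectedOn S :=
  h.of_map id (fun a ha b hb hab => (hadj a ha b hb hab).reachableWithin ha hb)
    fun u hu => ⟨u, hu, .refl S u⟩

theorem ConnectedOn.of_subset (h : G.ConnectedOn S') (hsub : S' ⊆ S)
    (hcover : ∀ u ∈ S, ∃ w ∈ S', G.ReachableWithin S u w) : G.ConnectedOn S :=
  h.of_map id (fun _ ha _ hb hab => hab.reachableWithin (hsub ha) (hsub hb)) hcover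

theorem IsK4.connectedOn (h : G.IsK4) (hS : S ⊆ G.verts) : G.ConnectedOn S := by
  intro u hu v hv
  by_cases huv : u = v
  · exact huv ▸ .refl S u
  · exact (h.2 u (hS hu) v (hS hv) huv).reachableWithin hu hv

theorem isFaceCycle_of_card_eq_three {C : Finset ℕ} (hcard : C.card = 3)
    (hclique : ∀ u ∈ C, ∀ v ∈ C, u ≠ v → G.Adj u v)
    (hconn : G.ConnectedOn (↑G.verts \ ↑C)) : G.IsFaceCycle C := by
  have hnbr : ∀ v ∈ C, {u | u ∈ C ∧ G.Adj v u} = ↑C \ {v} := by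
    intro v hv
    ext u
    simp only [Set.mem_ofPred_eq, Set.mem_sdiff, Finset.mem_coe, Set.mem_singleton_iff]
    exact and_congr_right fun hu => ⟨fun h => h.ne.symm, fun h => hclique v hv u hu (Ne.symm h)⟩
  refine ⟨fun u hu => ?_, hcard.ge, fun v hv => ?_, fun u hu v hv => ?_, hconn⟩
  · obtain ⟨v, hv, hvu⟩ := C.exists_mem_ne (by omega) u
    exact (hclique u hu v hv hvu.symm).mem_verts_left
  · rw [hnbr v hv, Set.ncard_sdiff_singleton_of_mem hv, Set.ncard_coe_finset, hcard]
  · by_cases huv : u = v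
    · exact huv ▸ .refl _ u
    · exact (hclique u hu v hv huv).reachableWithin hu hv

structure NoSeparatingPairOrTriangle (G : FinGraph) : Prop where
  pair : ∀ x ∈ G.verts, ∀ y ∈ G.verts, G.ConnectedOn (↑G.verts \ {x, y})
  triangle : ∀ a b c, G.Adj a b → G.Adj b c → G.Adj a c →
    G.ConnectedOn (↑G.verts \ {a, b, c})

theorem NoSeparatingPairOrTriangle.pair_left (hG : G.NoSeparatingPairOrTriangle)
    {x : ℕ} (hx : x ∈ G.verts) (y : ℕ) : G.ConnectedOn (↑G.verts \ {x, y}) := by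
  by_cases hy : y ∈ G.verts
  · exact hG.pair x hx y hy
  · have hxy : (↑G.verts \ {x, y} : Set ℕ) = ↑G.verts \ {x, x} := by
      ext w
      simp only [Set.mem_sdiff, Finset.mem_coe, Set.mem_insert_iff, Set.mem_singleton_iff]
      exact and_congr_right fun hw => by rw [or_iff_left (by rintro rfl; exact hy hw), or_self]
    rw [hxy]
    exact hG.pair x hx x hx

theorem IsK4.noSeparatingPairOrTriangle (h : G.IsK4) : G.NoSeparatingPairOrTriangle where
  pair _ _ _ _ := h.connectedOn Set.sdiff_subset
  triangle _ _ _ _ _ _ := h.connectedOn Set.sdiff_subset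

section D3a

variable {p q r p' q' r' t x y : ℕ}

theorem D3aConfig.swap12 (h : G.D3aConfig p q r p' q' r') : G.D3aConfig q p r q' p' r' := by
  obtain ⟨dp, dq, dr, hpq, hqr, hpr, hp, hq, hr, hp', hq', hr', h12, h13, h23⟩ := h
  rw [Set.insert_comm] at hp' hq' hr'
  exact ⟨dq, dp, dr, hpq.symm, hpr, hqr, hq, hp, hr, hq', hp', hr', h12.symm, h23, h13⟩

theorem D3aConfig.swap13 (h : G.D3aConfig p q r p' q' r') : G.D3aConfig r q p r' q' p' := by
  obtain ⟨dp, dq, dr, hpq, hqr, hpr, hp, hq, hr, hp', hq', hr', h12, h13, h23⟩ := h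
  have hT : ({p, q, r} : Set ℕ) = {r, q, p} := by
    ext; simp only [Set.mem_insert_iff, Set.mem_singleton_iff]; tauto
  rw [hT] at hp' hq' hr'
  exact ⟨dr, dq, dp, hqr.symm, hpq.symm, hpr.symm, hr, hq, hp, hr', hq', hp', h23.symm,
    h13.symm, h12.symm⟩

theorem D3aConfig.exists_eq_first (h : G.D3aConfig p q r p' q' r')
    (hu : u ∈ ({p, q, r} : Set ℕ)) :
    ∃ v w u' v' w', G.D3aConfig u v w u' v' w' ∧ ({u, v, w} : Set ℕ) = {p, q, r} := by
  rcases hu with rfl | rfl | rfl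
  · exact ⟨q, r, p', q', r', h, rfl⟩
  · exact ⟨p, r, q', p', r', h.swap12, Set.insert_comm _ _ _⟩
  · refine ⟨q, p, r', q', p', h.swap13, ?_⟩
    ext; simp only [Set.mem_insert_iff, Set.mem_singleton_iff]; tauto

theorem D3aConfig.neighborSet_eq (h : G.D3aConfig p q r p' q' r') :
    G.neighborSet p = {q, r, p'} := by
  obtain ⟨dp, -, -, hpq, hqr, hpr, hp, -, -, hp', -⟩ := h
  simp only [Set.mem_insert_iff, Set.mem_singleton_iff, not_or] at hp'
  exact neighborSet_eq_of_degree_eq_three dp hpq hpr hp hqr.ne (Ne.symm hp'.2.1)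
    (Ne.symm hp'.2.2)

theorem D3aConfig.not_adj_outside (h : G.D3aConfig p q r p' q' r') : ¬ G.Adj q p' := by
  intro hqp'
  have hmem : p' ∈ ({p, r, q'} : Set ℕ) := h.swap12.neighborSet_eq ▸ hqp'
  obtain ⟨-, -, -, -, -, -, -, -, -, hp', -, -, h12, -⟩ := h
  simp only [Set.mem_insert_iff, Set.mem_singleton_iff, not_or] at hp' hmem
  tauto

theorem D3aConfig.triangle_eq_of_adj_first (h : G.D3aConfig p q r p' q' r')
    (hb : G.Adj p b) (hc : G.Adj p c) (hbc : G.Adj b c) :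
    ({p, b, c} : Set ℕ) = {p, q, r} := by
  have hqp' := h.not_adj_outside
  have hrp' := h.swap12.swap13.swap12.not_adj_outside
  have hb' : b ∈ ({q, r, p'} : Set ℕ) := h.neighborSet_eq ▸ hb
  have hc' : c ∈ ({q, r, p'} : Set ℕ) := h.neighborSet_eq ▸ hc
  rcases hb' with rfl | rfl | rfl <;> rcases hc' with rfl | rfl | rfl <;>
    first
      | exact absurd hbc (G.loopless _)
      | rfl
      | exact congrArg _ (Set.pair_comm _ _)
      | exact absurd hbc ‹_›
      | exact absurd hbc.symm ‹_›

theorem D3aConfig.triangle_eq (h : G.D3aConfig p q r p' q' r')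
    (hab : G.Adj a b) (hbc : G.Adj b c) (hac : G.Adj a c)
    (hmeet : a ∈ ({p, q, r} : Set ℕ) ∨ b ∈ ({p, q, r} : Set ℕ) ∨ c ∈ ({p, q, r} : Set ℕ)) :
    ({a, b, c} : Set ℕ) = {p, q, r} := by
  have key : ∀ {a b c}, a ∈ ({p, q, r} : Set ℕ) → G.Adj a b → G.Adj a c → G.Adj b c →
      ({a, b, c} : Set ℕ) = {p, q, r} := by
    intro a b c ha hab hac hbc
    obtain ⟨_, _, _, _, _, h', hT⟩ := h.exists_eq_first ha
    exact (h'.triangle_eq_of_adj_first hab hac hbc).trans hT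
  rcases hmeet with ha | hb | hc
  · exact key ha hab hac hbc
  · rw [Set.insert_comm]
    exact key hb hab.symm hbc hac
  · have hrot : ({a, b, c} : Set ℕ) = {c, a, b} := by
      ext; simp only [Set.mem_insert_iff, Set.mem_singleton_iff]; tauto
    rw [hrot]
    exact key hc hac.symm hbc.symm hab

/-- Two deleted vertices cannot block all three routes `p p'`, `p q q'`, `p r r'`. -/
theorem D3aConfig.exists_reachableWithin_outside_of_first (h : G.D3aConfig p q r p' q' r')
    (hp : p ∈ (↑G.verts : Set ℕ) \ {x, y}) :
    ∃ w ∈ (↑G.verts : Set ℕ) \ {x, y}, w ∉ ({p, q, r} : Set ℕ) ∧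
      G.ReachableWithin (↑G.verts \ {x, y}) p w := by
  obtain ⟨-, -, -, hpq, hqr, hpr, hpp', hqq', hrr', hp', hq', hr', h12, h13, h23⟩ := h
  have hmem : ∀ {w}, G.Adj p w ∨ G.Adj w p ∨ G.Adj q w ∨ G.Adj r w → w ≠ x → w ≠ y →
      w ∈ (↑G.verts : Set ℕ) \ {x, y} := by
    rintro w (hw | hw | hw | hw) hx hy <;>
      exact ⟨by first | exact hw.mem_verts_right | exact hw.mem_verts_left, by simp [hx, hy]⟩
  simp only [Set.mem_insert_iff, Set.mem_singleton_iff, not_or] at hp' hq' hr'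
  by_cases hp'xy : p' ≠ x ∧ p' ≠ y
  · exact ⟨p', hmem (.inl hpp') hp'xy.1 hp'xy.2, by simpa using hp',
      hpp'.reachableWithin hp (hmem (.inl hpp') hp'xy.1 hp'xy.2)⟩
  by_cases hqxy : q ≠ x ∧ q ≠ y ∧ q' ≠ x ∧ q' ≠ y
  · have hqS := hmem (.inl hpq) hqxy.1 hqxy.2.1
    have hq'S := hmem (.inr (.inr (.inl hqq'))) hqxy.2.2.1 hqxy.2.2.2
    exact ⟨q', hq'S, by simpa using hq', (hpq.reachableWithin hp hqS).trans
      (hqq'.reachableWithin hqS hq'S)⟩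
  have hrxy : r ≠ x ∧ r ≠ y ∧ r' ≠ x ∧ r' ≠ y := by
    have := hqr.ne
    omega
  have hrS := hmem (.inl hpr) hrxy.1 hrxy.2.1
  have hr'S := hmem (.inr (.inr (.inr hrr'))) hrxy.2.2.1 hrxy.2.2.2
  exact ⟨r', hr'S, by simpa using hr', (hpr.reachableWithin hp hrS).trans
    (hrr'.reachableWithin hrS hr'S)⟩

theorem D3aConfig.exists_reachableWithin_outside (h : G.D3aConfig p q r p' q' r')
    (hu : u ∈ ({p, q, r} : Set ℕ)) (huS : u ∈ (↑G.verts : Set ℕ) \ {x, y}) :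
    ∃ w ∈ (↑G.verts : Set ℕ) \ {x, y}, w ∉ ({p, q, r} : Set ℕ) ∧
      G.ReachableWithin (↑G.verts \ {x, y}) u w := by
  obtain ⟨_, _, _, _, _, h', hT⟩ := h.exists_eq_first hu
  rw [← hT]
  exact h'.exists_reachableWithin_outside_of_first huS

theorem D3aConfig.mem_verts_of_mem_outside (h : G.D3aConfig p q r p' q' r')
    (hb : b ∈ ({p', q', r'} : Set ℕ)) : b ∈ G.verts := by
  obtain ⟨-, -, -, -, -, -, hpp', hqq', hrr', -⟩ := h
  rcases hb with rfl | rfl | rfl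
  exacts [hpp'.mem_verts_right, hqq'.mem_verts_right, hrr'.mem_verts_right]

theorem D3aConfig.reachableWithin_of_mem_outside (h : G.D3aConfig p q r p' q' r')
    (hT : ({p, q, r} : Set ℕ) ⊆ S) (hb : b ∈ ({p', q', r'} : Set ℕ)) (hbS : b ∈ S) :
    G.ReachableWithin S p b := by
  obtain ⟨-, -, -, hpq, -, hpr, hpp', hqq', hrr', -⟩ := h
  have hpS : p ∈ S := hT (by simp)
  rcases hb with rfl | rfl | rfl
  · exact hpp'.reachableWithin hpS hbS
  · have hqS : q ∈ S := hT (by simp)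
    exact (hpq.reachableWithin hpS hqS).trans (hqq'.reachableWithin hqS hbS)
  · have hrS : r ∈ S := hT (by simp)
    exact (hpr.reachableWithin hpS hrS).trans (hrr'.reachableWithin hrS hbS)

structure D3aAt (G H : FinGraph) (p q r p' q' r' t : ℕ) : Prop where
  config : G.D3aConfig p q r p' q' r'
  fresh : t ∉ G.verts
  verts_eq : H.verts = (G.verts \ {p, q, r}) ∪ {t}
  adj_iff : ∀ a b, H.Adj a b ↔
    (G.Adj a b ∧ a ∉ ({p, q, r} : Set ℕ) ∧ b ∉ ({p, q, r} : Set ℕ)) ∨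
    (a = t ∧ b ∈ ({p', q', r'} : Set ℕ)) ∨
    (b = t ∧ a ∈ ({p', q', r'} : Set ℕ))

theorem D3aAt.mem_verts_iff (h : G.D3aAt H p q r p' q' r' t) :
    w ∈ H.verts ↔ (w ∈ G.verts ∧ w ∉ ({p, q, r} : Set ℕ)) ∨ w = t := by
  simp [h.verts_eq, or_comm]

theorem D3aAt.ne_fresh (h : G.D3aAt H p q r p' q' r' t) (hw : w ∈ G.verts) : w ≠ t :=
  fun e => h.fresh (e ▸ hw)

theorem D3aAt.connectedOn_of_notMem (h : G.D3aAt H p q r p' q' r' t) (ht : t ∉ S)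
    (hH : H.ConnectedOn S) : G.ConnectedOn S :=
  hH.of_adj fun a ha b hb hab => by
    rcases (h.adj_iff a b).1 hab with hab | ⟨rfl, -⟩ | ⟨rfl, -⟩
    · exact hab.1
    · exact absurd ha ht
    · exact absurd hb ht

theorem D3aAt.connectedOn_diff (h : G.D3aAt H p q r p' q' r' t) {X : Set ℕ}
    (hX : Disjoint ({p, q, r} : Set ℕ) X) (htX : t ∉ X)
    (hH : H.ConnectedOn (↑H.verts \ X)) : G.ConnectedOn (↑G.verts \ X) := by
  obtain ⟨-, -, -, hpq, hqr, hpr, -⟩ := h.config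
  have hT : ({p, q, r} : Set ℕ) ⊆ ↑G.verts \ X := by
    rintro u hu
    refine ⟨?_, Set.disjoint_left.1 hX hu⟩
    rcases hu with rfl | rfl | rfl
    exacts [hpq.mem_verts_left, hpq.mem_verts_right, hpr.mem_verts_right]
  have hlift : ∀ b ∈ (↑H.verts : Set ℕ) \ X, b ∈ ({p', q', r'} : Set ℕ) →
      G.ReachableWithin (↑G.verts \ X) p b := fun b hb hb' =>
    h.config.reachableWithin_of_mem_outside hT hb' ⟨h.config.mem_verts_of_mem_outside hb', hb.2⟩
  refine hH.of_map (fun w => if w = t then p else w) (fun a ha b hb hab => ?_) fun u hu => ?_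
  · rcases (h.adj_iff a b).1 hab with ⟨hab, -⟩ | ⟨hat, hb'⟩ | ⟨hbt, ha'⟩
    · simp only [h.ne_fresh hab.mem_verts_left, h.ne_fresh hab.mem_verts_right, if_false]
      exact hab.reachableWithin ⟨hab.mem_verts_left, ha.2⟩ ⟨hab.mem_verts_right, hb.2⟩
    · rw [if_pos hat, if_neg (hat ▸ hab.ne.symm)]
      exact hlift b hb hb'
    · rw [if_pos hbt, if_neg (hbt ▸ hab.ne)]
      exact (hlift a ha ha').symm
  · by_cases huT : u ∈ ({p, q, r} : Set ℕ)
    · refine ⟨t, ⟨h.mem_verts_iff.2 (.inr rfl), htX⟩, ?_⟩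
      simp only [if_true]
      by_cases hup : u = p
      · exact hup ▸ .refl _ u
      · exact (adj_of_mem_triangle hpq hqr hpr huT (Set.mem_insert p _) hup).reachableWithin
          hu (hT (Set.mem_insert p _))
    · refine ⟨u, ⟨h.mem_verts_iff.2 (.inl ⟨hu.1, huT⟩), hu.2⟩, ?_⟩
      simp only [h.ne_fresh hu.1, if_false]
      exact .refl _ u

theorem D3aAt.connectedOn_diff_pair_of_mem_triangle (h : G.D3aAt H p q r p' q' r' t)
    (hH : H.NoSeparatingPairOrTriangle) (hx : x ∈ ({p, q, r} : Set ℕ)) :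
    G.ConnectedOn (↑G.verts \ {x, y}) := by
  have hS' : ∀ {w}, w ∈ G.verts → w ∉ ({p, q, r} : Set ℕ) → w ≠ y →
      w ∈ (↑H.verts : Set ℕ) \ {t, y} := fun hw hwT hwy =>
    ⟨h.mem_verts_iff.2 (.inl ⟨hw, hwT⟩), by simp [h.ne_fresh hw, hwy]⟩
  have hG : G.ConnectedOn (↑H.verts \ {t, y}) :=
    h.connectedOn_of_notMem (by simp) (hH.pair_left (h.mem_verts_iff.2 (.inr rfl)) y)
  refine hG.of_subset (fun w ⟨hw, hwty⟩ => ?_) fun u hu => ?_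
  · simp only [Set.mem_insert_iff, Set.mem_singleton_iff, not_or] at hwty
    obtain ⟨hwG, hwT⟩ := (h.mem_verts_iff.1 hw).resolve_right hwty.1
    exact ⟨hwG, by simp [hwty.2, show w ≠ x by rintro rfl; exact hwT hx]⟩
  · by_cases huT : u ∈ ({p, q, r} : Set ℕ)
    · obtain ⟨w, hw, hwT, hreach⟩ := h.config.exists_reachableWithin_outside huT hu
      exact ⟨w, hS' hw.1 hwT fun e => hw.2 (by simp [e]), hreach⟩
    · exact ⟨u, hS' hu.1 huT fun e => hu.2 (by simp [e]), .refl _ u⟩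

theorem D3aAt.connectedOn_diff_pair (h : G.D3aAt H p q r p' q' r' t)
    (hH : H.NoSeparatingPairOrTriangle) (hx : x ∈ G.verts) (hy : y ∈ G.verts) :
    G.ConnectedOn (↑G.verts \ {x, y}) := by
  by_cases hxyT : x ∈ ({p, q, r} : Set ℕ) ∨ y ∈ ({p, q, r} : Set ℕ)
  · rcases hxyT with hxT | hyT
    · exact h.connectedOn_diff_pair_of_mem_triangle hH hxT
    · rw [Set.pair_comm]
      exact h.connectedOn_diff_pair_of_mem_triangle hH hyT
  rw [not_or] at hxyT
  refine h.connectedOn_diff ?_ (by simp [(h.ne_fresh hx).symm, (h.ne_fresh hy).symm])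
    (hH.pair x (h.mem_verts_iff.2 (.inl ⟨hx, hxyT.1⟩))
      y (h.mem_verts_iff.2 (.inl ⟨hy, hxyT.2⟩)))
  rw [Set.disjoint_right]
  rintro w (rfl | rfl)
  exacts [hxyT.1, hxyT.2]

theorem D3aAt.connectedOn_diff_triangle (h : G.D3aAt H p q r p' q' r' t)
    (hH : H.NoSeparatingPairOrTriangle) (hab : G.Adj a b) (hbc : G.Adj b c) (hac : G.Adj a c) :
    G.ConnectedOn (↑G.verts \ {a, b, c}) := by
  by_cases habcT : a ∈ ({p, q, r} : Set ℕ) ∨ b ∈ ({p, q, r} : Set ℕ) ∨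
      c ∈ ({p, q, r} : Set ℕ)
  · rw [h.config.triangle_eq hab hbc hac habcT]
    have hdiff : (↑H.verts \ {t, t} : Set ℕ) = ↑G.verts \ {p, q, r} := by
      ext w
      simp only [Set.mem_sdiff, Finset.mem_coe, h.mem_verts_iff, Set.pair_eq_singleton,
        Set.mem_singleton_iff]
      constructor
      · rintro ⟨hw | rfl, hwt⟩
        exacts [hw, absurd rfl hwt]
      · exact fun hw => ⟨.inl hw, h.ne_fresh hw.1⟩
    rw [← hdiff]
    exact h.connectedOn_of_notMem (by simp) (hH.pair t (h.mem_verts_iff.2 (.inr rfl))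
      t (h.mem_verts_iff.2 (.inr rfl)))
  simp only [not_or] at habcT
  have hadj : ∀ {u v}, G.Adj u v → u ∉ ({p, q, r} : Set ℕ) → v ∉ ({p, q, r} : Set ℕ) →
      H.Adj u v := fun huv hu hv => (h.adj_iff _ _).2 (.inl ⟨huv, hu, hv⟩)
  refine h.connectedOn_diff ?_ ?_ (hH.triangle a b c (hadj hab habcT.1 habcT.2.1)
    (hadj hbc habcT.2.1 habcT.2.2) (hadj hac habcT.1 habcT.2.2))
  · rw [Set.disjoint_right]
    rintro w (rfl | rfl | rfl)
    exacts [habcT.1, habcT.2.1, habcT.2.2]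
  · simp [(h.ne_fresh hab.mem_verts_left).symm, (h.ne_fresh hab.mem_verts_right).symm,
      (h.ne_fresh hac.mem_verts_right).symm]

theorem NoSeparatingPairOrTriangle.of_d3aAt (h : G.D3aAt H p q r p' q' r' t)
    (hH : H.NoSeparatingPairOrTriangle) : G.NoSeparatingPairOrTriangle where
  pair _ hx _ hy := h.connectedOn_diff_pair hH hx hy
  triangle _ _ _ hab hbc hac := h.connectedOn_diff_triangle hH hab hbc hac

end D3a

section D3b

variable {p q r s x y : ℕ}

theorem D3bConfig.neighborSet_middle (h : G.D3bConfig p q r s) :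
    G.neighborSet q = {p, r, s} := by
  obtain ⟨-, dq, -, hpq, hqr, -, hpr, hsp, hsq, hsr⟩ := h
  exact neighborSet_eq_of_degree_eq_three dq hpq.symm hqr hsq.symm hpr hsp.ne.symm hsr.ne.symm

theorem D3bConfig.exists_adj_ne (h : G.D3bConfig p q r s) :
    ∃ w, G.Adj p w ∧ w ≠ q ∧ w ≠ s := by
  obtain ⟨dp, -, -, -, -, -, -, -, hsq, -⟩ := h
  have hnsub : ¬ G.neighborSet p ⊆ {q, s} := fun hsub => by
    have : G.degree p ≤ 2 := (Set.ncard_le_ncard hsub).trans (Set.ncard_pair hsq.ne.symm).le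
    omega
  obtain ⟨w, hw, hwqs⟩ := Set.not_subset.1 hnsub
  simp only [Set.mem_insert_iff, Set.mem_singleton_iff, not_or] at hwqs
  exact ⟨w, hw, hwqs⟩

theorem D3bConfig.triangle_eq (h : G.D3bConfig p q r s)
    (hab : G.Adj a b) (hbc : G.Adj b c) (hac : G.Adj a c) (hq : q ∈ ({a, b, c} : Set ℕ)) :
    ({a, b, c} : Set ℕ) = {p, q, s} ∨ ({a, b, c} : Set ℕ) = {r, q, s} := by
  have hN : G.neighborSet q = {p, r, s} := h.neighborSet_middle
  obtain ⟨-, -, -, -, -, hpr, -⟩ := h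
  have key : ∀ {b c}, G.Adj q b → G.Adj q c → G.Adj b c →
      ({q, b, c} : Set ℕ) = {p, q, s} ∨ ({q, b, c} : Set ℕ) = {r, q, s} := by
    intro b c hb hc hbc
    have hb' : b ∈ ({p, r, s} : Set ℕ) := hN ▸ hb
    have hc' : c ∈ ({p, r, s} : Set ℕ) := hN ▸ hc
    rcases hb' with rfl | rfl | rfl <;> rcases hc' with rfl | rfl | rfl <;>
      first
        | exact absurd hbc (G.loopless _)
        | exact absurd hbc hpr
        | exact absurd hbc.symm hpr
        | (left; ext; simp only [Set.mem_insert_iff, Set.mem_singleton_iff]; tauto)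
        | (right; ext; simp only [Set.mem_insert_iff, Set.mem_singleton_iff]; tauto)
  rcases hq with rfl | rfl | rfl
  · exact key hab hac hbc
  · rw [Set.insert_comm]
    exact key hab.symm hbc hac
  · have hrot : ({a, b, q} : Set ℕ) = {q, a, b} := by
      ext; simp only [Set.mem_insert_iff, Set.mem_singleton_iff]; tauto
    rw [hrot]
    exact key hac.symm hbc.symm hab

structure D3bAt (G H : FinGraph) (p q r s : ℕ) : Prop where
  config : G.D3bConfig p q r s
  verts_eq : H.verts = G.verts \ {q}
  adj_iff : ∀ a b, H.Adj a b ↔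
    (G.Adj a b ∧ a ≠ q ∧ b ≠ q) ∨ (a = p ∧ b = r) ∨ (a = r ∧ b = p)

theorem D3bAt.mem_verts_iff (h : G.D3bAt H p q r s) : w ∈ H.verts ↔ w ∈ G.verts ∧ w ≠ q := by
  simp [h.verts_eq]

theorem D3bAt.coe_verts_diff (h : G.D3bAt H p q r s) (X : Set ℕ) :
    (↑H.verts \ X : Set ℕ) = (↑G.verts \ X) \ {q} := by
  ext w
  simp only [Set.mem_sdiff, Finset.mem_coe, h.mem_verts_iff, Set.mem_singleton_iff]
  tauto

theorem D3bAt.connectedOn_of_notMem (h : G.D3bAt H p q r s) (hpr : p ∉ S ∨ r ∉ S)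
    (hH : H.ConnectedOn S) : G.ConnectedOn S :=
  hH.of_adj fun a ha b hb hab => by
    rcases (h.adj_iff a b).1 hab with hab | ⟨rfl, rfl⟩ | ⟨rfl, rfl⟩
    · exact hab.1
    · exact absurd ⟨ha, hb⟩ (not_and_or.2 hpr)
    · exact absurd ⟨hb, ha⟩ (not_and_or.2 hpr)

theorem D3bAt.connectedOn_of_mem (h : G.D3bAt H p q r s) (hq : q ∈ S) (hqw : G.Adj q w)
    (hw : w ∈ S) (hH : H.ConnectedOn (S \ {q})) : G.ConnectedOn S := by
  obtain ⟨-, -, -, hpq, hqr, -⟩ := h.config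
  refine hH.of_map id (fun a ha b hb hab => ?_) fun u hu => ?_
  · rcases (h.adj_iff a b).1 hab with ⟨hab, -⟩ | ⟨rfl, rfl⟩ | ⟨rfl, rfl⟩
    · exact hab.reachableWithin ha.1 hb.1
    · exact (hpq.reachableWithin ha.1 hq).trans (hqr.reachableWithin hq hb.1)
    · exact (hqr.symm.reachableWithin ha.1 hq).trans (hpq.symm.reachableWithin hq hb.1)
  · by_cases huq : u = q
    · exact ⟨w, ⟨hw, hqw.ne.symm⟩, huq ▸ hqw.reachableWithin hq hw⟩
    · exact ⟨u, ⟨hu, huq⟩, .refl S u⟩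

theorem D3bAt.connectedOn_diff_pair_middle (h : G.D3bAt H p q r s)
    (hH : H.NoSeparatingPairOrTriangle) (y : ℕ) : G.ConnectedOn (↑G.verts \ {q, y}) := by
  obtain ⟨-, -, -, hpq, -, -, -, hsp, hsq, -⟩ := h.config
  have hS' : ∀ {z}, z ∈ G.verts → z ≠ q → z ≠ p → z ≠ y → z ∈ (↑H.verts : Set ℕ) \ {p, y} :=
    fun hz hzq hzp hzy => ⟨h.mem_verts_iff.2 ⟨hz, hzq⟩, by simp [hzp, hzy]⟩
  have hG : G.ConnectedOn (↑H.verts \ {p, y}) :=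
    h.connectedOn_of_notMem (.inl (by simp))
      (hH.pair_left (h.mem_verts_iff.2 ⟨hpq.mem_verts_left, hpq.ne⟩) y)
  refine hG.of_subset (fun z ⟨hz, hzpy⟩ => ?_) fun u hu => ?_
  · obtain ⟨hzG, hzq⟩ := h.mem_verts_iff.1 hz
    exact ⟨hzG, by simp only [Set.mem_insert_iff, Set.mem_singleton_iff] at hzpy ⊢; tauto⟩
  · simp only [Set.mem_sdiff, Finset.mem_coe, Set.mem_insert_iff, Set.mem_singleton_iff,
      not_or] at hu
    by_cases hup : u = p
    · rw [hup] at hu ⊢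
      obtain ⟨z, hpz, hzq, hzy⟩ : ∃ z, G.Adj p z ∧ z ≠ q ∧ z ≠ y := by
        by_cases hsy : s = y
        · obtain ⟨w, hpw, hwq, hws⟩ := h.config.exists_adj_ne
          exact ⟨w, hpw, hwq, hsy ▸ hws⟩
        · exact ⟨s, hsp.symm, hsq.ne, hsy⟩
      have hzS : z ∈ (↑G.verts : Set ℕ) \ {q, y} := ⟨hpz.mem_verts_right, by simp [hzq, hzy]⟩
      exact ⟨z, hS' hpz.mem_verts_right hzq hpz.ne.symm hzy,
        hpz.reachableWithin (by simp [hu.1, hu.2.1, hu.2.2]) hzS⟩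
    · exact ⟨u, hS' hu.1 hu.2.1 hup hu.2.2, .refl _ u⟩

theorem D3bAt.connectedOn_diff_pair (h : G.D3bAt H p q r s)
    (hH : H.NoSeparatingPairOrTriangle) (hx : x ∈ G.verts) (hy : y ∈ G.verts) :
    G.ConnectedOn (↑G.verts \ {x, y}) := by
  obtain ⟨-, -, -, hpq, hqr, -, hpr, hsp, hsq, hsr⟩ := h.config
  by_cases hqxy : q = x ∨ q = y
  · rcases hqxy with rfl | rfl
    · exact h.connectedOn_diff_pair_middle hH y
    · rw [Set.pair_comm]
      exact h.connectedOn_diff_pair_middle hH x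
  rw [not_or] at hqxy
  have hHxy := hH.pair x (h.mem_verts_iff.2 ⟨hx, Ne.symm hqxy.1⟩)
    y (h.mem_verts_iff.2 ⟨hy, Ne.symm hqxy.2⟩)
  rw [h.coe_verts_diff] at hHxy
  obtain ⟨w, hqw, hwxy⟩ : ∃ w, G.Adj q w ∧ w ≠ x ∧ w ≠ y := by
    by_cases hp : p ≠ x ∧ p ≠ y
    · exact ⟨p, hpq.symm, hp⟩
    by_cases hr : r ≠ x ∧ r ≠ y
    · exact ⟨r, hqr, hr⟩
    refine ⟨s, hsq.symm, ?_⟩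
    have := hsp.ne
    have := hsr.ne
    omega
  exact h.connectedOn_of_mem ⟨hqr.mem_verts_left, by simp [hqxy.1, hqxy.2]⟩ hqw
    ⟨hqw.mem_verts_right, by simp [hwxy.1, hwxy.2]⟩ hHxy

theorem D3bAt.connectedOn_diff_triangle (h : G.D3bAt H p q r s)
    (hH : H.NoSeparatingPairOrTriangle) (hab : G.Adj a b) (hbc : G.Adj b c) (hac : G.Adj a c) :
    G.ConnectedOn (↑G.verts \ {a, b, c}) := by
  obtain ⟨-, -, -, hpq, hqr, hnpr, hpr, hsp, hsq, hsr⟩ := h.config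
  have hHmem : ∀ {w}, G.Adj q w → w ∈ H.verts := fun hqw =>
    h.mem_verts_iff.2 ⟨hqw.mem_verts_right, hqw.ne.symm⟩
  by_cases hq : q ∈ ({a, b, c} : Set ℕ)
  · have key : ∀ {w}, w = p ∨ w = r → G.ConnectedOn (↑G.verts \ {w, q, s}) := by
      intro w hw
      have hdiff : (↑G.verts \ {w, q, s} : Set ℕ) = ↑H.verts \ {w, s} := by
        rw [h.coe_verts_diff]
        ext; simp only [Set.mem_sdiff, Set.mem_insert_iff, Set.mem_singleton_iff]; tauto
      have hqw : G.Adj q w := by rcases hw with rfl | rfl; exacts [hpq.symm, hqr]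
      rw [hdiff]
      exact h.connectedOn_of_notMem (hw.imp (by rintro rfl; simp) (by rintro rfl; simp))
        (hH.pair w (hHmem hqw) s (hHmem hsq.symm))
    rcases h.config.triangle_eq hab hbc hac hq with e | e <;> rw [e]
    exacts [key (.inl rfl), key (.inr rfl)]
  · have hne : a ≠ q ∧ b ≠ q ∧ c ≠ q := by
      simp only [Set.mem_insert_iff, Set.mem_singleton_iff, not_or] at hq
      exact ⟨Ne.symm hq.1, Ne.symm hq.2.1, Ne.symm hq.2.2⟩
    have hadj : ∀ {u v}, G.Adj u v → u ≠ q → v ≠ q → H.Adj u v := fun huv hu hv =>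
      (h.adj_iff _ _).2 (.inl ⟨huv, hu, hv⟩)
    have hHabc := hH.triangle a b c (hadj hab hne.1 hne.2.1) (hadj hbc hne.2.1 hne.2.2)
      (hadj hac hne.1 hne.2.2)
    rw [h.coe_verts_diff] at hHabc
    obtain ⟨w, hqw, hw⟩ : ∃ w, G.Adj q w ∧ w ∉ ({a, b, c} : Set ℕ) := by
      by_cases hp : p ∈ ({a, b, c} : Set ℕ)
      · exact ⟨r, hqr, fun hr => hnpr (adj_of_mem_triangle hab hbc hac hp hr hpr)⟩
      · exact ⟨p, hpq.symm, hp⟩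
    exact h.connectedOn_of_mem ⟨hqr.mem_verts_left, hq⟩ hqw ⟨hqw.mem_verts_right, hw⟩ hHabc

theorem NoSeparatingPairOrTriangle.of_d3bAt (h : G.D3bAt H p q r s)
    (hH : H.NoSeparatingPairOrTriangle) : G.NoSeparatingPairOrTriangle where
  pair _ hx _ hy := h.connectedOn_diff_pair hH hx hy
  triangle _ _ _ hab hbc hac := h.connectedOn_diff_triangle hH hab hbc hac

end D3b

theorem NoSeparatingPairOrTriangle.of_d3Step (h : G.D3Step H)
    (hH : H.NoSeparatingPairOrTriangle) : G.NoSeparatingPairOrTriangle := by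
  rcases h with ⟨p, q, r, p', q', r', t, hcfg, ht, hV, hA⟩ | ⟨p, q, r, s, hcfg, hV, hA⟩
  · exact .of_d3aAt ⟨hcfg, ht, hV, hA⟩ hH
  · exact .of_d3bAt ⟨hcfg, hV, hA⟩ hH

theorem NoSeparatingPairOrTriangle.of_reflTransGen (h : Relation.ReflTransGen D3Step G H)
    (hH : H.NoSeparatingPairOrTriangle) : G.NoSeparatingPairOrTriangle := by
  induction h using Relation.ReflTransGen.head_induction_on with
  | refl => exact hH
  | head hstep _ ih => exact .of_d3Step hstep ih

theorem D3Reducible.noSeparatingPairOrTriangle (h : G.D3Reducible) :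
    G.NoSeparatingPairOrTriangle :=
  let ⟨_, hred, hK4⟩ := h
  .of_reflTransGen hred hK4.noSeparatingPairOrTriangle

end FinGraph

/-- In the unique planar embedding of a D3-reducible graph, every triangle is a face.
(Faces of a 3-connected planar graph are, by Tutte's characterization, exactly the
induced cycles with connected complement, as expressed by `IsFaceCycle`.) -/
theorem d3_reducible_triangle_is_face (G : FinGraph) (h : G.D3Reducible)
    (p q r : ℕ) (hpq : G.Adj p q) (hqr : G.Adj q r) (hpr : G.Adj p r) :
    FinGraph.IsFaceCycle G {p, q, r} := by
  refine FinGraph.isFaceCycle_of_card_eq_three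
    (Finset.card_eq_three.2 ⟨p, q, r, hpq.ne, hpr.ne, hqr.ne, rfl⟩) (fun u hu v hv huv => ?_) ?_
  · exact FinGraph.adj_of_mem_triangle hpq hqr hpr (by simpa using hu) (by simpa using hv) huv
  · push_cast
    exact h.noSeparatingPairOrTriangle.triangle p q r hpq hqr hpr
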